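/- Let F(x,y) = (1+y)*sqrt(2)*tan(x/sqrt(2)) - x, defined for x near 0 and y arbitrary. Then the vector fields e1 = ∂x - ((u+x)/2)∂y + y∂u and e2 = (1+y)∂y + (x+u)∂u are tangent to the surface {u = F(x,y)}; explicitly, with u = F(x,y): y - F_x + ((F+x)/2)*F_y = 0 and (x+F) - (1+y)*F_y = 0. -/
import Mathlib

/-- The surface `u = (1+y)*√2*tan(x/√2) - x`. -/
noncomputable def F (x y : ℝ) : ℝ :=
  (1 + y) * Real.sqrt 2 * Real.tan (x / Real.sqrt 2) - x

/-- `F_x = (1+y)*(1 + tan(x/√2)^2) - 1`. -/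
noncomputable def Fx (x y : ℝ) : ℝ :=
  (1 + y) * (1 + Real.tan (x / Real.sqrt 2) ^ 2) - 1

/-- `F_y = √2*tan(x/√2)`. -/
noncomputable def Fy (x y : ℝ) : ℝ :=
  Real.sqrt 2 * Real.tan (x / Real.sqrt 2)

/-- Tangency of `e1 = ∂x - ((u+x)/2)∂y + y∂u` and
`e2 = (1+y)∂y + (x+u)∂u` to the surface `{u = F(x,y)}`. -/
theorem tangency_tan_surface (x y : ℝ)
    (hx : Real.cos (x / Real.sqrt 2) ≠ 0) :
    y - Fx x y + ((F x y + x) / 2) * Fy x y = 0 ∧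
    (x + F x y) - (1 + y) * Fy x y = 0 := by
  have h2 : Real.sqrt 2 * Real.sqrt 2 = 2 := Real.mul_self_sqrt (by norm_num)
  simp only [F, Fx, Fy]
  constructor
  · linear_combination ((1 + y) * Real.tan (x / Real.sqrt 2) ^ 2 / 2) * h2
  · ring
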